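/- arXiv:2211.03605 — 6 statements merged into one kernel-verified Lean document; each statement's English description precedes it below -/
import Mathlib

section
/- Let n be a positive integer, F ⊂ ℂ a field, and p₁,…,pₙ,q₁,…,qₙ fixed positive integers with p_i + q_i = N for all i = 1,…,n (for some fixed positive integer N). If the additive functions f₁,…,fₙ,g₁,…,gₙ: F → ℂ satisfy ∑_{i=1}^{n} f_i(x^{p_i}) g_i(x^{q_i}) = 0 for all x ∈ F, then (1/N!) ∑_{σ ∈ S_N} ∑_{i=1}^{n} f_i(x_{σ(1)} ⋯ x_{σ(p_i)}) · g_i(x_{σ(p_i+1)} ⋯ x_{σ(N)}) = 0 holds for all x₁,…,x_N ∈ F, where S_N denotes the symmetric group on N elements. -/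
/-!
Fix `x : Fin N → F` and, for `a : Fin N → Fin N`, let `v a` be the sum over `i` of
`f i (∏_{t < p i} x (a t)) * g i (∏_{t ≥ p i} x (a t))`. For `T ⊆ Fin N`, evaluating the
hypothesis at `y = ∑_{j ∉ T} x j` and expanding `y ^ p i` and `y ^ q i` by additivity of
`f i` and `g i` shows that `v` sums to zero over the maps avoiding `T`. By inclusion–exclusion
the sum of `v` over the surjective maps, i.e. over the permutations of `Fin N`, is an
alternating sum of such sums, hence zero.
-/

open Finset

theorem sum_pow_card_eq_sum_prod {ι κ R : Type*} [Fintype ι] [DecidableEq ι] [Fintype κ]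
    [CommSemiring R] (x : κ → R) :
    (∑ j, x j) ^ Fintype.card ι = ∑ a : ι → κ, ∏ t, x (a t) := by
  rw [← Fintype.prod_sum, prod_const, card_univ]

theorem sum_map_prod_mul_map_prod_compl {ι κ R S : Type*} [Fintype ι] [DecidableEq ι]
    [Fintype κ] [CommSemiring R] [NonUnitalNonAssocSemiring S] (f g : R →+ S)
    (A : Finset ι) (x : κ → R) :
    ∑ a : ι → κ, f (∏ t ∈ A, x (a t)) * g (∏ t ∈ Aᶜ, x (a t)) =
      f ((∑ j, x j) ^ #A) * g ((∑ j, x j) ^ #Aᶜ) := by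
  have hA : #A = Fintype.card {t // t ∈ A} := (Fintype.card_coe A).symm
  have hAc : #Aᶜ = Fintype.card {t // t ∉ A} := by
    rw [Fintype.card_subtype_compl, Fintype.card_coe, card_compl]
  rw [hA, hAc, sum_pow_card_eq_sum_prod, sum_pow_card_eq_sum_prod, map_sum, map_sum,
    sum_mul_sum, ← Fintype.sum_prod_type']
  refine Fintype.sum_equiv (Equiv.piEquivPiSubtypeProd (· ∈ A) fun _ => κ) _ _ fun a => ?_
  rw [← prod_coe_sort A, prod_subtype Aᶜ (p := (· ∉ A)) (fun t => mem_compl)]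
  rfl

theorem sum_filter_forall_eq_sum_pi_subtype {ι κ M : Type*} [Fintype ι] [DecidableEq ι]
    [Fintype κ] [AddCommMonoid M] (p : κ → Prop) [DecidablePred p]
    (w : (ι → κ) → M) :
    ∑ a with ∀ i, p (a i), w a = ∑ a : ι → {k // p k}, w fun i => a i := by
  rw [sum_subtype _ (p := fun a : ι → κ => ∀ i, p (a i)) (fun a => by simp)]
  exact Fintype.sum_equiv Equiv.subtypePiEquivPi _ _ fun _ => rfl

theorem sum_perm_eq_sum_filter_surjective {α M : Type*} [Fintype α] [DecidableEq α]
    [AddCommMonoid M] (v : (α → α) → M) :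
    ∑ σ : Equiv.Perm α, v σ = ∑ a with Function.Surjective a, v a := by
  refine sum_bij (fun σ _ => ⇑σ) (fun σ _ => by simpa using σ.surjective)
    (fun σ _ τ _ h => Equiv.coe_fn_injective h) (fun a ha => ?_) (fun _ _ => rfl)
  have hbij : Function.Bijective a := Finite.surjective_iff_bijective.1 (mem_filter.1 ha).2
  exact ⟨Equiv.ofBijective a hbij, mem_univ _, rfl⟩

theorem inclusion_exclusion_sum_filter_surjective {α β M : Type*} [Fintype α] [DecidableEq α]
    [Fintype β] [DecidableEq β] [AddCommGroup M] (v : (α → β) → M) :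
    ∑ a with Function.Surjective a, v a =
      ∑ T : Finset β, (-1 : ℤ) ^ #T • ∑ a with ∀ i, a i ∉ T, v a := by
  let avoiding (b : β) : Finset (α → β) := {a | ∀ i, a i ≠ b}
  have hsurj :
      univ.inf (fun b => (avoiding b)ᶜ) = ({a | Function.Surjective a} : Finset (α → β)) := by
    ext a
    simp only [avoiding, mem_inf, mem_compl, mem_filter, mem_univ, true_and, not_forall,
      not_not]
    exact ⟨fun h b => h b trivial, fun h b _ => h b⟩
  have havoid (T : Finset β) : T.inf avoiding = ({a | ∀ i, a i ∉ T} : Finset (α → β)) := by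
    ext a
    simp only [avoiding, mem_inf, mem_filter, mem_univ, true_and]
    exact ⟨fun h i hi => h _ hi i rfl, fun h _ hb i hi => h i (hi ▸ hb)⟩
  rw [← hsurj, inclusion_exclusion_sum_inf_compl, powerset_univ]
  simp only [havoid]

theorem symmetrization_general
    (n : ℕ) (F : Subfield ℂ) (N : ℕ)
    (p q : Fin n → ℕ)
    (hpq : ∀ i, p i + q i = N)
    (f g : Fin n → F → ℂ)
    (hfadd : ∀ i, ∀ x y : F, f i (x + y) = f i x + f i y)
    (hgadd : ∀ i, ∀ x y : F, g i (x + y) = g i x + g i y)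
    (heq : ∀ x : F, ∑ i, f i (x ^ p i) * g i (x ^ q i) = 0) :
    ∀ x : Fin N → F,
      (1 / (N.factorial : ℂ)) *
        ∑ σ : Equiv.Perm (Fin N), ∑ i,
          f i (∏ t ∈ Finset.univ.filter (fun t : Fin N => (t : ℕ) < p i), x (σ t)) *
          g i (∏ t ∈ Finset.univ.filter (fun t : Fin N => p i ≤ (t : ℕ)), x (σ t)) = 0 := by
  intro x
  let A : Fin n → Finset (Fin N) := fun i => {t | (t : ℕ) < p i}
  have hAc i : ({t | p i ≤ (t : ℕ)} : Finset (Fin N)) = (A i)ᶜ := by ext; simp [A]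
  have hA i : #(A i) = p i := by simp only [A, Fin.card_filter_val_lt]; grind
  have hAc_card i : #(A i)ᶜ = q i := by rw [card_compl, hA, Fintype.card_fin]; grind
  have hpolar (T : Finset (Fin N)) (i : Fin n) :
      ∑ a : Fin N → {k // k ∉ T}, f i (∏ t ∈ A i, x (a t)) * g i (∏ t ∈ (A i)ᶜ, x (a t)) =
        f i ((∑ j : {k // k ∉ T}, x j) ^ p i) * g i ((∑ j : {k // k ∉ T}, x j) ^ q i) := by
    rw [← hA, ← hAc_card]
    exact sum_map_prod_mul_map_prod_compl (.mk' (f i) (hfadd i)) (.mk' (g i) (hgadd i)) (A i)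
      fun j : {k // k ∉ T} => x j
  let v (a : Fin N → Fin N) : ℂ :=
    ∑ i, f i (∏ t ∈ A i, x (a t)) * g i (∏ t ∈ (A i)ᶜ, x (a t))
  simp only [hAc]
  rw [sum_perm_eq_sum_filter_surjective v, inclusion_exclusion_sum_filter_surjective,
    sum_eq_zero fun T _ => ?_, mul_zero]
  rw [sum_filter_forall_eq_sum_pi_subtype (ι := Fin N) (· ∉ T), sum_comm]
  simp only [hpolar, heq, smul_zero]

/-- **Symmetrization lemma.**
Let `n` be a positive integer, `F ⊂ ℂ` a field, and `p₁,…,pₙ,q₁,…,qₙ` positive integers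
with `p i + q i = N` for all `i`.  If the additive functions `f₁,…,fₙ,g₁,…,gₙ : F → ℂ`
satisfy `∑ i, f i (x ^ p i) * g i (x ^ q i) = 0` for all `x ∈ F`, then
`(1/N!) ∑_{σ ∈ S_N} ∑ i, f i (x_{σ 1} ⋯ x_{σ (p i)}) * g i (x_{σ (p i + 1)} ⋯ x_{σ N}) = 0`
for all `x₁,…,x_N ∈ F`. -/
theorem symmetrization
    (n : ℕ) (hn : 0 < n) (F : Subfield ℂ) (N : ℕ) (hN : 0 < N)
    (p q : Fin n → ℕ) (hp : ∀ i, 0 < p i) (hq : ∀ i, 0 < q i)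
    (hpq : ∀ i, p i + q i = N)
    (f g : Fin n → F → ℂ)
    (hfadd : ∀ i, ∀ x y : F, f i (x + y) = f i x + f i y)
    (hgadd : ∀ i, ∀ x y : F, g i (x + y) = g i x + g i y)
    (heq : ∀ x : F, ∑ i, f i (x ^ p i) * g i (x ^ q i) = 0) :
    ∀ x : Fin N → F,
      (1 / (N.factorial : ℂ)) *
        ∑ σ : Equiv.Perm (Fin N), ∑ i,
          f i (∏ t ∈ Finset.univ.filter (fun t : Fin N => (t : ℕ) < p i), x (σ t)) *
          g i (∏ t ∈ Finset.univ.filter (fun t : Fin N => p i ≤ (t : ℕ)), x (σ t)) = 0 :=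
  symmetrization_general n F N p q hpq f g hfadd hgadd heq
end

section
/- Let F ⊂ ℂ be a field, r a positive integer, and d₁,…,d_r: F → F linearly independent derivations. For every multi-index α = (α₁,…,α_r) ∈ ℕ^r define φ_α: F^× → ℂ by φ_α(x) = d₁^{α₁} ∘ ⋯ ∘ d_r^{α_r}(x) (iterated composition, with d_i^0 the identity). Then (φ_α)_{α ∈ ℕ^r} is a generalized moment sequence of rank r on the commutative group F^×, i.e. φ_α(xy) = ∑_{β ≤ α} (α choose β) φ_β(x) φ_{α−β}(y) for all x, y ∈ F^× and all α ∈ ℕ^r, and the generating function φ₀ is the identity function. -/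
/-- `multiComp r d α = d₁^{α₁} ∘ ⋯ ∘ d_r^{α_r}` (iterated composition of the maps
`d i`, with exponents given by the multi-index `α`). -/
def multiComp {F : Type*} : (r : ℕ) → (Fin r → F → F) → (Fin r → ℕ) → F → F
  | 0, _, _ => id
  | r + 1, d, α => (d 0)^[α 0] ∘ multiComp r (fun i => d i.succ) (fun i => α i.succ)


section aux

variable {R : Type*} [CommRing R]

private lemma iterate_add_hom (d : R → R) (hadd : ∀ x y, d (x + y) = d x + d y)
    (n : ℕ) : ∀ x y : R, d^[n] (x + y) = d^[n] x + d^[n] y := by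
  induction n with
  | zero => simp
  | succ n ih =>
    intro x y
    simp only [Function.iterate_succ_apply', ih, hadd]

private lemma iterate_sum (d : R → R) (hadd : ∀ x y, d (x + y) = d x + d y)
    (n : ℕ) {ι : Type*} (s : Finset ι) (f : ι → R) :
    d^[n] (∑ i ∈ s, f i) = ∑ i ∈ s, d^[n] (f i) :=
  map_sum (AddMonoidHom.mk' (d^[n]) (iterate_add_hom d hadd n)) f s

private lemma iterate_nsmul (d : R → R) (hadd : ∀ x y, d (x + y) = d x + d y)
    (n m : ℕ) (x : R) : d^[n] (m • x) = m • d^[n] x :=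
  map_nsmul (AddMonoidHom.mk' (d^[n]) (iterate_add_hom d hadd n)) m x

private lemma iter_leibniz_aux (d : R → R) (hadd : ∀ x y, d (x + y) = d x + d y)
    (hmul : ∀ x y, d (x * y) = x * d y + d x * y) (n : ℕ) (p q : R) :
    d^[n] (p * q) =
      ∑ k ∈ Finset.range n.succ, (n.choose k • (d^[n - k] p * d^[k] q)) := by
  have dsum : ∀ {ι : Type} (s : Finset ι) (f : ι → R),
      d (∑ i ∈ s, f i) = ∑ i ∈ s, d (f i) := fun s f => iterate_sum d hadd 1 s f
  have dsmul : ∀ (m : ℕ) (x : R), d (m • x) = m • d x := fun m x =>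
    iterate_nsmul d hadd 1 m x
  induction n with
  | zero => simp
  | succ n IH =>
    calc
      d^[n + 1] (p * q) =
          d (∑ k ∈ Finset.range n.succ, n.choose k • (d^[n - k] p * d^[k] q)) := by
        rw [Function.iterate_succ_apply', IH]
      _ = (∑ k ∈ Finset.range n.succ,
            n.choose k • (d^[n - k + 1] p * d^[k] q)) +
          ∑ k ∈ Finset.range n.succ,
            n.choose k • (d^[n - k] p * d^[k + 1] q) := by
        simp_rw [dsum, dsmul, hmul, Function.iterate_succ_apply', smul_add,
          Finset.sum_add_distrib]
        rw [add_comm]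
      _ = (∑ k ∈ Finset.range n.succ,
                n.choose k.succ • (d^[n - k] p * d^[k + 1] q)) +
              1 • (d^[n + 1] p * d^[0] q) +
            ∑ k ∈ Finset.range n.succ, n.choose k • (d^[n - k] p * d^[k + 1] q) :=
        ?_
      _ = ((∑ k ∈ Finset.range n.succ, n.choose k • (d^[n - k] p * d^[k + 1] q)) +
              ∑ k ∈ Finset.range n.succ,
                n.choose k.succ • (d^[n - k] p * d^[k + 1] q)) +
            1 • (d^[n + 1] p * d^[0] q) := by
        rw [add_comm, add_assoc]
      _ = (∑ i ∈ Finset.range n.succ,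
              (n + 1).choose (i + 1) • (d^[n + 1 - (i + 1)] p * d^[i + 1] q)) +
            1 • (d^[n + 1] p * d^[0] q) := by
        simp_rw [Nat.choose_succ_succ, Nat.succ_sub_succ, add_smul,
          Finset.sum_add_distrib]
      _ = ∑ k ∈ Finset.range n.succ.succ,
            n.succ.choose k • (d^[n.succ - k] p * d^[k] q) := by
        rw [Finset.sum_range_succ' _ n.succ, Nat.choose_zero_right, tsub_zero]
    congr
    refine (Finset.sum_range_succ' _ _).trans (congr_arg₂ (· + ·) ?_ ?_)
    · rw [Finset.sum_range_succ, Nat.choose_succ_self, zero_smul, add_zero]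
      refine Finset.sum_congr rfl fun k hk => ?_
      rw [Finset.mem_range] at hk
      congr
      omega
    · rw [Nat.choose_zero_right, tsub_zero]

private lemma iter_leibniz (d : R → R) (hadd : ∀ x y, d (x + y) = d x + d y)
    (hmul : ∀ x y, d (x * y) = x * d y + d x * y) (n : ℕ) (x y : R) :
    d^[n] (x * y) =
      ∑ k ∈ Finset.range (n + 1), (n.choose k • (d^[k] x * d^[n - k] y)) := by
  rw [mul_comm, iter_leibniz_aux d hadd hmul]
  exact Finset.sum_congr rfl fun k hk => by rw [mul_comm]

private lemma multiComp_mul : ∀ (r : ℕ) (d : Fin r → R → R),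
    (∀ i x y, d i (x + y) = d i x + d i y) →
    (∀ i x y, d i (x * y) = x * d i y + d i x * y) →
    ∀ (α : Fin r → ℕ) (x y : R),
    multiComp r d α (x * y) =
      ∑ β : (∀ i : Fin r, Fin (α i + 1)),
        (∏ i, (α i).choose (β i)) •
          (multiComp r d (fun i => (β i : ℕ)) x *
            multiComp r d (fun i => α i - (β i : ℕ)) y) := by
  intro r
  induction r with
  | zero =>
    intro d _ _ α x y
    simp [multiComp]
  | succ r IH =>
    intro d hadd hmul α x y
    have hadd0 := hadd 0
    set d' : Fin r → R → R := fun i => d i.succ with hd'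
    have key : multiComp (r + 1) d α (x * y) =
        (d 0)^[α 0] (multiComp r d' (fun i => α i.succ) (x * y)) := rfl
    rw [key, IH d' (fun i => hadd i.succ) (fun i => hmul i.succ),
      iterate_sum (d 0) hadd0]
    simp_rw [iterate_nsmul (d 0) hadd0,
      iter_leibniz (d 0) hadd0 (hmul 0), Finset.sum_range, Finset.smul_sum]
    rw [← Equiv.sum_comp (Fin.consEquiv (fun i : Fin (r + 1) => Fin (α i + 1))),
      Fintype.sum_prod_type, Finset.sum_comm]
    refine Finset.sum_congr rfl fun k _ => Finset.sum_congr rfl fun β _ => ?_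
    have h1 : multiComp (r + 1) d
        (fun i => ((Fin.consEquiv (fun i : Fin (r + 1) => Fin (α i + 1))) (k, β) i : ℕ)) x
        = (d 0)^[(k : ℕ)] (multiComp r d' (fun i => (β i : ℕ)) x) := by
      show (d 0)^[_] (multiComp r d' _ x) = _
      simp [Fin.consEquiv]
    have h2 : multiComp (r + 1) d
        (fun i => α i - ((Fin.consEquiv (fun i : Fin (r + 1) => Fin (α i + 1))) (k, β) i : ℕ)) y
        = (d 0)^[α 0 - (k : ℕ)] (multiComp r d' (fun i => α i.succ - (β i : ℕ)) y) := by
      show (d 0)^[_] (multiComp r d' _ y) = _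
      simp [Fin.consEquiv]
    rw [h1, h2, smul_smul, Fin.prod_univ_succ]
    congr 1
    simp [Fin.consEquiv, mul_comm]

private lemma multiComp_zero : ∀ (r : ℕ) (d : Fin r → R → R) (x : R),
    multiComp r d (fun _ => 0) x = x := by
  intro r
  induction r with
  | zero => intro d x; rfl
  | succ r IH => intro d x; exact IH _ x

end aux

/-- **Compositions of derivations form a moment sequence.**
Let `F ⊂ ℂ` be a field, `r` a positive integer and `d₁,…,d_r : F → F` linearly
independent derivations.  For a multi-index `α ∈ ℕ^r`, set
`φ_α(x) = d₁^{α₁} ∘ ⋯ ∘ d_r^{α_r} (x)`.  Then `(φ_α)` is a generalized moment sequence of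
rank `r` on the commutative group `F^×`, i.e.
`φ_α(xy) = ∑_{β ≤ α} (α choose β) φ_β(x) φ_{α−β}(y)` for all nonzero `x, y ∈ F`,
and the generating function `φ₀` is the identity. -/
theorem derivations_moment_sequence
    (F : Subfield ℂ) (r : ℕ) (hr : 0 < r)
    (d : Fin r → F → F)
    (hadd : ∀ i, ∀ x y : F, d i (x + y) = d i x + d i y)
    (hder : ∀ i, ∀ x y : F, d i (x * y) = x * d i y + d i x * y)
    (hind : LinearIndependent ℂ (fun i : Fin r => fun x : F => (d i x : ℂ))) :
    (∀ (α : Fin r → ℕ) (x y : F), x ≠ 0 → y ≠ 0 →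
      ((multiComp r d α (x * y) : F) : ℂ) =
        ∑ β : (∀ i : Fin r, Fin (α i + 1)),
          ((∏ i, (α i).choose (β i) : ℕ) : ℂ) *
            ((multiComp r d (fun i => (β i : ℕ)) x : F) : ℂ) *
            ((multiComp r d (fun i => α i - (β i : ℕ)) y : F) : ℂ)) ∧
    (∀ x : F, multiComp r d (fun _ => 0) x = x) := by
  refine ⟨fun α x y _ _ => ?_, fun x => multiComp_zero r d x⟩
  rw [multiComp_mul r d hadd hder α x y]
  push_cast
  refine Finset.sum_congr rfl fun β _ => ?_
  rw [nsmul_eq_mul]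
  push_cast
  ring
end

section
/- Let n be a positive integer, G a commutative semigroup, and S a commutative group, and suppose multiplication by n! is surjective on G or injective on S. Then for any symmetric n-additive function A: G^n → S, if the diagonalization A*(x) = A(x,…,x) is identically zero, then A is identically zero. -/
/-- `A : G^n → S` is symmetric and `n`-additive: a semigroup homomorphism in each variable,
invariant under permutations of the variables. -/
def IsSymMultiAdd {G S : Type*} [AddCommSemigroup G] [AddCommGroup S]
    (n : ℕ) (A : (Fin n → G) → S) : Prop :=
  (∀ (σ : Equiv.Perm (Fin n)) (x : Fin n → G), A (x ∘ σ) = A x) ∧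
  (∀ (x : Fin n → G) (i : Fin n) (y z : G),
    A (Function.update x i (y + z)) = A (Function.update x i y) + A (Function.update x i z))

/-- `nsmulPos k g = (k + 1) • g`: iterated addition in a (not necessarily unital)
commutative semigroup, so that `nsmulPos (m - 1) g` is "multiplication by `m`" for `m ≥ 1`. -/
def nsmulPos {G : Type*} [AddCommSemigroup G] : ℕ → G → G
  | 0, g => g
  | k + 1, g => g + nsmulPos k g

section Aux

open Finset

variable {G S : Type*} [AddCommSemigroup G] [AddCommGroup S] {n : ℕ}

open scoped Classical in
/-- Extension of `A` to `(WithZero G)^n`, vanishing as soon as one coordinate is zero. -/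
noncomputable def extFun (A : (Fin n → G) → S) (x : Fin n → WithZero G) : S :=
  if h : ∀ i, x i ≠ 0 then A (fun i => (x i).unzero (h i)) else 0

theorem extFun_coe (A : (Fin n → G) → S) (u : Fin n → G) :
    extFun A (fun i => ↑(u i)) = A u := by
  rw [extFun, dif_pos (fun i => WithZero.coe_ne_zero)]
  exact congrArg A (funext fun j => WithZero.unzero_coe _)

theorem extFun_coord_zero (A : (Fin n → G) → S) {x : Fin n → WithZero G} (i : Fin n)
    (hx : x i = 0) : extFun A x = 0 :=
  dif_neg (fun hall => hall i hx)

theorem extFun_update_coe [DecidableEq (Fin n)] (A : (Fin n → G) → S) (x : Fin n → WithZero G) (i : Fin n)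
    (h : ∀ j, j ≠ i → x j ≠ 0) (w : Fin n → G)
    (hw : ∀ j (hj : j ≠ i), (w j : WithZero G) = x j) (c : G) :
    extFun A (Function.update x i ↑c) = A (Function.update w i c) := by
  have hpos : ∀ j, Function.update x i (↑c : WithZero G) j ≠ 0 := by
    intro j
    rcases eq_or_ne j i with rfl | hj
    · rw [Function.update_self]; exact WithZero.coe_ne_zero
    · rw [Function.update_of_ne hj]; exact h j hj
  rw [extFun, dif_pos hpos]
  refine congrArg A (funext fun j => ?_)
  rcases eq_or_ne j i with rfl | hj
  · have : ((Function.update x j (↑c : WithZero G) j).unzero (hpos j) : WithZero G)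
        = ↑c := by rw [WithZero.coe_unzero, Function.update_self]
    rw [WithZero.coe_inj.mp this, Function.update_self]
  · have : ((Function.update x i (↑c : WithZero G) j).unzero (hpos j) : WithZero G)
        = ↑(w j) := by rw [WithZero.coe_unzero, Function.update_of_ne hj, hw j hj]
    rw [WithZero.coe_inj.mp this, Function.update_of_ne hj]

theorem extFun_map_add [DecidableEq (Fin n)] (A : (Fin n → G) → S)
    (hadd : ∀ (x : Fin n → G) (i : Fin n) (y z : G),
      A (Function.update x i (y + z)) = A (Function.update x i y) + A (Function.update x i z))
    (x : Fin n → WithZero G) (i : Fin n) (y z : WithZero G) :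
    extFun A (Function.update x i (y + z)) =
      extFun A (Function.update x i y) + extFun A (Function.update x i z) := by
  by_cases h : ∀ j, j ≠ i → x j ≠ 0
  · have hup : ∀ (c : WithZero G) (j : Fin n), j ≠ i → Function.update x i c j ≠ 0 :=
      fun c j hj => by rw [Function.update_of_ne hj]; exact h j hj
    have h0 : extFun A (Function.update x i (0 : WithZero G)) = 0 :=
      extFun_coord_zero A i (by rw [Function.update_self])
    rcases eq_or_ne y 0 with rfl | hy
    · rw [zero_add, h0, zero_add]
    rcases eq_or_ne z 0 with rfl | hz
    · rw [add_zero, h0, add_zero]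
    obtain ⟨a, rfl⟩ := WithZero.ne_zero_iff_exists.mp hy
    obtain ⟨b, rfl⟩ := WithZero.ne_zero_iff_exists.mp hz
    classical
    set w : Fin n → G := fun j => if hj : j ≠ i then (x j).unzero (h j hj) else a with hwdef
    have hw : ∀ j (hj : j ≠ i), (w j : WithZero G) = x j := by
      intro j hj; rw [hwdef]; simp only [dif_pos hj]; exact WithZero.coe_unzero _
    rw [← WithZero.coe_add, extFun_update_coe A x i h w hw,
      extFun_update_coe A x i h w hw, extFun_update_coe A x i h w hw, hadd]
  · push_neg at h
    obtain ⟨j, hj, hj0⟩ := h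
    have hz : ∀ c : WithZero G, extFun A (Function.update x i c) = 0 := fun c =>
      extFun_coord_zero A j (by rw [Function.update_of_ne hj]; exact hj0)
    rw [hz, hz, hz, add_zero]

theorem extFun_map_smul [DecidableEq (Fin n)] (A : (Fin n → G) → S)
    (hadd : ∀ (x : Fin n → G) (i : Fin n) (y z : G),
      A (Function.update x i (y + z)) = A (Function.update x i y) + A (Function.update x i z))
    (x : Fin n → WithZero G) (i : Fin n) (c : ℕ) (y : WithZero G) :
    extFun A (Function.update x i (c • y)) = c • extFun A (Function.update x i y) := by
  induction c with
  | zero =>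
      rw [zero_smul, zero_smul, extFun_coord_zero A i (by rw [Function.update_self])]
  | succ k ih =>
      rw [succ_nsmul, extFun_map_add A hadd, ih, succ_nsmul]

/-- The extension packaged as a `ℕ`-multilinear map. -/
noncomputable def extML (A : (Fin n → G) → S)
    (hadd : ∀ (x : Fin n → G) (i : Fin n) (y z : G),
      A (Function.update x i (y + z)) = A (Function.update x i y) + A (Function.update x i z)) :
    MultilinearMap ℕ (fun _ : Fin n => WithZero G) S where
  toFun := extFun A
  map_update_add' := by
    intro inst m i a b
    have h : inst = instDecidableEqFin n :=
      funext fun a => funext fun b => Subsingleton.elim _ _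
    subst h
    exact extFun_map_add A hadd m i a b
  map_update_smul' := by
    intro inst m i c a
    have h : inst = instDecidableEqFin n :=
      funext fun a => funext fun b => Subsingleton.elim _ _
    subst h
    exact extFun_map_smul A hadd m i c a

theorem key_polarization (n : ℕ) (hn : 0 < n)
    (A : (Fin n → G) → S) (hA : IsSymMultiAdd n A)
    (hdiag : ∀ x : G, A (fun _ => x) = 0) (x : Fin n → G) :
    n.factorial • A x = 0 := by
  classical
  obtain ⟨hsym, hadd⟩ := hA
  set E := extML A hadd with hE
  set y : Fin n → WithZero G := fun j => ↑(x j) with hy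
  have i0 : Fin n := ⟨0, hn⟩
  -- Each diagonal value vanishes
  have hF0 : ∀ T : Finset (Fin n),
      (∑ f ∈ Fintype.piFinset (fun _ : Fin n => T), E (fun i => y (f i))) = 0 := by
    intro T
    rw [← MultilinearMap.map_sum_finset E (fun _ j => y j) (fun _ => T)]
    rcases T.eq_empty_or_nonempty with rfl | hT
    · exact E.map_coord_zero i0 (by simp)
    · obtain ⟨g, hg⟩ : ∃ g : G, (∑ j ∈ T, y j) = ↑g := by
        induction hT using Finset.Nonempty.cons_induction with
        | singleton a => exact ⟨x a, by simp [hy]⟩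
        | cons a s ha hs ih =>
            obtain ⟨g, hg⟩ := ih
            exact ⟨x a + g, by rw [Finset.sum_cons, hg, WithZero.coe_add]⟩
      have : E (fun _ => (↑g : WithZero G)) = A (fun _ => g) :=
        extFun_coe A (fun _ => g)
      rw [show (fun _ : Fin n => ∑ j ∈ T, y j) = fun _ => (↑g : WithZero G) from
        funext fun _ => hg, this, hdiag]
  -- the alternating sum
  have h2 : (0 : S) = ∑ T ∈ (Finset.univ : Finset (Fin n)).powerset,
      (-1 : ℤ) ^ (n - T.card) •
        (∑ f ∈ Fintype.piFinset (fun _ : Fin n => T), E (fun i => y (f i))) := by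
    simp [hF0]
  -- rewrite inner sums with indicators over all functions
  have h3 : ∀ T : Finset (Fin n),
      (∑ f ∈ Fintype.piFinset (fun _ : Fin n => T), E (fun i => y (f i)))
      = ∑ f ∈ (Finset.univ : Finset (Fin n → Fin n)),
          if (∀ i, f i ∈ T) then E (fun i => y (f i)) else 0 := by
    intro T
    rw [show (∑ f ∈ (Finset.univ : Finset (Fin n → Fin n)),
        if (∀ i, f i ∈ T) then E (fun i => y (f i)) else 0)
      = ∑ f ∈ (Finset.univ : Finset (Fin n → Fin n)),
          if f ∈ Fintype.piFinset (fun _ : Fin n => T) then E (fun i => y (f i)) else 0 from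
        Finset.sum_congr rfl fun f _ => by simp [Fintype.mem_piFinset],
      Finset.sum_ite_mem, Finset.univ_inter]
  -- swap the order of summation
  have h4 : (0 : S) = ∑ f ∈ (Finset.univ : Finset (Fin n → Fin n)),
      (∑ T ∈ (Finset.univ : Finset (Fin n)).powerset,
        if (∀ i, f i ∈ T) then (-1 : ℤ) ^ (n - T.card) else 0) • E (fun i => y (f i)) := by
    rw [h2]
    rw [Finset.sum_congr rfl (fun T _ => by
      rw [h3 T, Finset.smul_sum])]
    rw [Finset.sum_comm]
    refine Finset.sum_congr rfl fun f _ => ?_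
    rw [Finset.sum_smul]
    refine Finset.sum_congr rfl fun T _ => ?_
    by_cases hc : ∀ i, f i ∈ T
    · rw [if_pos hc, if_pos hc]
    · rw [if_neg hc, if_neg hc, smul_zero, zero_smul]
  -- compute the coefficients
  have hc : ∀ f : Fin n → Fin n,
      (∑ T ∈ (Finset.univ : Finset (Fin n)).powerset,
        if (∀ i, f i ∈ T) then (-1 : ℤ) ^ (n - T.card) else 0)
      = if Function.Surjective f then 1 else 0 := by
    intro f
    set R : Finset (Fin n) := Finset.image f Finset.univ with hR
    have hmem : ∀ T : Finset (Fin n), (∀ i, f i ∈ T) ↔ R ⊆ T := by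
      intro T
      rw [hR, Finset.image_subset_iff]
      exact ⟨fun h a _ => h a, fun h a => h a (Finset.mem_univ a)⟩
    rw [← Finset.sum_filter]
    have hbij : (∑ T ∈ ((Finset.univ : Finset (Fin n)).powerset.filter
          fun T => ∀ i, f i ∈ T), (-1 : ℤ) ^ (n - T.card))
        = ∑ U ∈ Rᶜ.powerset, (-1 : ℤ) ^ (Rᶜ.card - U.card) := by
      refine Finset.sum_bij' (fun T _ => T \ R) (fun U _ => R ∪ U) ?_ ?_ ?_ ?_ ?_
      · intro T hT
        simp only [Finset.mem_filter, Finset.mem_powerset] at hT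
        rw [Finset.mem_powerset]
        intro a ha
        rw [Finset.mem_sdiff] at ha
        rw [Finset.mem_compl]; exact ha.2
      · intro U hU
        rw [Finset.mem_powerset] at hU
        simp only [Finset.mem_filter, Finset.mem_powerset]
        refine ⟨Finset.subset_univ _, ?_⟩
        rw [hmem]; exact Finset.subset_union_left
      · intro T hT
        simp only [Finset.mem_filter, Finset.mem_powerset, hmem] at hT
        exact Finset.union_sdiff_of_subset hT.2
      · intro U hU
        rw [Finset.mem_powerset] at hU
        refine Finset.union_sdiff_cancel_left ?_
        exact Finset.disjoint_left.mpr fun a haR haU =>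
          (Finset.mem_compl.mp (hU haU)) haR
      · intro T hT
        simp only [Finset.mem_filter, Finset.mem_powerset, hmem] at hT
        congr 1
        have hRT : R ⊆ T := hT.2
        have hTn : T.card ≤ n := by
          simpa using Finset.card_le_card (Finset.subset_univ T)
        rw [Finset.card_sdiff_of_subset hRT, Finset.card_compl, Fintype.card_fin,
          Nat.sub_sub, Nat.add_sub_cancel' (Finset.card_le_card hRT)]
    rw [hbij]
    have hterm : ∀ U ∈ Rᶜ.powerset,
        (-1 : ℤ) ^ (Rᶜ.card - U.card) = (-1 : ℤ) ^ Rᶜ.card * (-1 : ℤ) ^ U.card := by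
      intro U hU
      rw [Finset.mem_powerset] at hU
      have hle : U.card ≤ Rᶜ.card := Finset.card_le_card hU
      have h1 : (-1 : ℤ) ^ (Rᶜ.card - U.card) * (-1 : ℤ) ^ U.card
          = (-1 : ℤ) ^ Rᶜ.card := by rw [← pow_add, Nat.sub_add_cancel hle]
      have h2 : ((-1 : ℤ) ^ U.card) * ((-1 : ℤ) ^ U.card) = 1 := by
        rw [← pow_add, Even.neg_one_pow ⟨U.card, rfl⟩]
      calc (-1 : ℤ) ^ (Rᶜ.card - U.card)
          = (-1 : ℤ) ^ (Rᶜ.card - U.card) * (((-1 : ℤ) ^ U.card) * ((-1 : ℤ) ^ U.card)) := by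
            rw [h2, mul_one]
        _ = (-1 : ℤ) ^ Rᶜ.card * (-1 : ℤ) ^ U.card := by rw [← mul_assoc, h1]
    rw [Finset.sum_congr rfl hterm, ← Finset.mul_sum,
      Finset.sum_powerset_neg_one_pow_card]
    have hsurj : Function.Surjective f ↔ R = Finset.univ := by
      rw [hR, Finset.eq_univ_iff_forall]
      constructor
      · intro hs b
        obtain ⟨a, rfl⟩ := hs b
        exact Finset.mem_image_of_mem f (Finset.mem_univ a)
      · intro h b
        obtain ⟨a, _, ha⟩ := Finset.mem_image.mp (h b)
        exact ⟨a, ha⟩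
    by_cases hs : Function.Surjective f
    · have : Rᶜ = ∅ := (Finset.compl_eq_empty_iff R).mpr (hsurj.mp hs)
      rw [if_pos hs, this]
      simp
    · have : Rᶜ ≠ ∅ := fun h =>
        hs (hsurj.mpr ((Finset.compl_eq_empty_iff R).mp h))
      rw [if_neg hs, if_neg this, mul_zero]
  -- conclude
  have h5 : (0 : S) = ∑ f ∈ (Finset.univ : Finset (Fin n → Fin n)).filter
      (fun f => Function.Surjective f), E (fun i => y (f i)) := by
    rw [h4, Finset.sum_filter]
    refine Finset.sum_congr rfl fun f _ => ?_
    rw [hc f]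
    by_cases hs : Function.Surjective f
    · rw [if_pos hs, if_pos hs, one_smul]
    · rw [if_neg hs, if_neg hs, zero_smul]
  have hval : ∀ f ∈ (Finset.univ : Finset (Fin n → Fin n)).filter
      (fun f => Function.Surjective f), E (fun i => y (f i)) = A x := by
    intro f hf
    rw [Finset.mem_filter] at hf
    have hb : Function.Bijective f := ⟨Finite.injective_iff_surjective.mpr hf.2, hf.2⟩
    have : E (fun i => y (f i)) = A (x ∘ f) := extFun_coe A (x ∘ f)
    rw [this, show x ∘ f = x ∘ (Equiv.ofBijective f hb) from rfl, hsym]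
  have hcard : ((Finset.univ : Finset (Fin n → Fin n)).filter
      (fun f => Function.Surjective f)).card = n.factorial := by
    rw [show n.factorial = Fintype.card (Equiv.Perm (Fin n)) by
      rw [Fintype.card_perm, Fintype.card_fin], ← Finset.card_univ]
    refine Finset.card_bij' (fun f hf => Equiv.ofBijective f
        ⟨Finite.injective_iff_surjective.mpr (Finset.mem_filter.mp hf).2,
          (Finset.mem_filter.mp hf).2⟩)
      (fun σ _ => ⇑σ) (fun _ _ => Finset.mem_univ _) ?_ ?_ ?_
    · intro σ _
      rw [Finset.mem_filter]
      exact ⟨Finset.mem_univ _, σ.surjective⟩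
    · intro f hf; rfl
    · intro σ _; exact Equiv.ext fun a => rfl
  rw [Finset.sum_congr rfl hval, Finset.sum_const, hcard] at h5
  exact h5.symm

theorem A_nsmulPos (A : (Fin n → G) → S)
    (hadd : ∀ (x : Fin n → G) (i : Fin n) (y z : G),
      A (Function.update x i (y + z)) = A (Function.update x i y) + A (Function.update x i z))
    (x : Fin n → G) (i : Fin n) (yv : G) :
    ∀ k : ℕ, A (Function.update x i (nsmulPos k yv)) = (k + 1) • A (Function.update x i yv)
  | 0 => by rw [nsmulPos, zero_add, one_smul]
  | k + 1 => by
      rw [nsmulPos, hadd, A_nsmulPos A hadd x i yv k]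
      have h := succ_nsmul (A (Function.update x i yv)) (k + 1)
      rw [h]
      exact add_comm _ _

end Aux

/-- **Vanishing of the diagonal implies vanishing.**
Let `n` be a positive integer, `G` a commutative semigroup and `S` a commutative group,
and suppose multiplication by `n!` is surjective on `G` or injective on `S`.  Then any
symmetric `n`-additive `A : G^n → S` whose diagonalization `A*` vanishes identically is
itself identically zero. -/
theorem diagonal_zero_implies_zero
    {G S : Type*} [AddCommSemigroup G] [AddCommGroup S]
    (n : ℕ) (hn : 0 < n)
    (hGS : Function.Surjective (fun g : G => nsmulPos (n.factorial - 1) g) ∨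
           Function.Injective (fun s : S => n.factorial • s))
    (A : (Fin n → G) → S) (hA : IsSymMultiAdd n A)
    (hdiag : ∀ x : G, A (fun _ => x) = 0) :
    ∀ x : Fin n → G, A x = 0 := by
  intro x
  have key := key_polarization n hn A hA hdiag
  rcases hGS with hsurj | hinj
  · set i0 : Fin n := ⟨0, hn⟩
    obtain ⟨y0, hy0⟩ := hsurj (x i0)
    simp only at hy0
    have hx : x = Function.update x i0 (nsmulPos (n.factorial - 1) y0) := by
      rw [hy0, Function.update_eq_self]
    rw [hx, A_nsmulPos A hA.2 x i0 y0 (n.factorial - 1),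
      Nat.sub_add_cancel (Nat.one_le_iff_ne_zero.mpr n.factorial_ne_zero)]
    exact key _
  · apply hinj
    simp only [key x, smul_zero]
end

section
/- Let G be a commutative group and n a positive integer, and let a = (a₁,…,aₙ) where a₁,…,aₙ: G → ℂ are linearly independent additive functions. Then the monomials a^α := ∏_{i=1}^{n} a_i^{α_i}, for distinct multi-indices α ∈ ℕ^n, are linearly independent over ℂ as functions on G. -/
/-!
The map `x ↦ (a₁ x, …, aₙ x)` sends `G` onto an additive submonoid `M` of `ℂⁿ`, and linear
independence of the `aᵢ` says exactly that `M` spans `ℂⁿ`. A vanishing linear combination of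
monomials is a polynomial `P` vanishing on `M`. Choosing a basis `b` of `ℂⁿ` inside `M`, the
polynomial `c ↦ P (∑ cᵢ bᵢ)` vanishes on `ℕⁿ`, hence is zero, so `P = 0`. Thus the `aᵢ` are
algebraically independent, and the monomials in them are linearly independent.
-/

open MvPolynomial

theorem LinearIndependent.span_range_swap_eq_top {K X ι : Type*} [Field K] [Fintype ι]
    {a : ι → X → K} (ha : LinearIndependent K a) :
    Submodule.span K (Set.range (Function.swap a)) = ⊤ := by
  classical
  rw [← Submodule.dualAnnihilator_eq_bot_iff, Submodule.eq_bot_iff]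
  intro φ hφ
  have hcoeff : ∀ i, φ (fun j => if i = j then 1 else 0) = 0 := by
    refine Fintype.linearIndependent_iff.mp ha _ (_root_.funext fun x => ?_)
    have hx : φ (Function.swap a x) = 0 :=
      (Submodule.mem_dualAnnihilator φ).mp hφ _ (Submodule.subset_span ⟨x, rfl⟩)
    rw [LinearMap.pi_apply_eq_sum_univ φ] at hx
    simpa [Finset.sum_apply, mul_comm] using hx
  refine LinearMap.ext fun v => ?_
  rw [LinearMap.pi_apply_eq_sum_univ φ v]
  simp [hcoeff]

namespace MvPolynomial

theorem eval_bind₁_sum_C_mul_X {R σ ι : Type*} [CommRing R] [Fintype ι] (b : ι → σ → R)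
    (p : MvPolynomial σ R) (c : ι → R) :
    eval c (bind₁ (fun j => ∑ i, C (b i j) * X i) p) = eval (∑ i, c i • b i) p := by
  simp only [eval, eval₂Hom_bind₁]
  congr 2
  funext j
  simp [Finset.sum_apply, mul_comm]

theorem eq_zero_of_eval_natCast_eq_zero {K σ : Type*} [Field K] [CharZero K]
    {p : MvPolynomial σ K} (hp : ∀ k : σ → ℕ, eval (fun i => (k i : K)) p = 0) : p = 0 :=
  funext_set (fun _ => Set.range Nat.cast)
    (fun _ => Set.infinite_range_of_injective Nat.cast_injective) fun x hx => by
      choose k hk using fun i => hx i trivial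
      obtain rfl : (fun i => (k i : K)) = x := _root_.funext hk
      simpa using hp k

theorem eq_zero_of_eval_eq_zero_of_span_eq_top {K σ : Type*} [Field K] [CharZero K]
    [Fintype σ] (M : AddSubmonoid (σ → K)) (hM : Submodule.span K (M : Set (σ → K)) = ⊤)
    {p : MvPolynomial σ K} (hp : ∀ v ∈ M, eval v p = 0) : p = 0 := by
  let b := Module.Basis.ofSpan hM.ge
  have hbM : ∀ i, b i ∈ M := fun i => Module.Basis.ofSpan_subset hM.ge ⟨i, rfl⟩
  let := FiniteDimensional.fintypeBasisIndex b
  have hq : bind₁ (fun j => ∑ i, C (b i j) * X i) p = 0 :=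
    eq_zero_of_eval_natCast_eq_zero fun k => by
      rw [eval_bind₁_sum_C_mul_X]
      refine hp _ (AddSubmonoid.sum_mem _ fun i _ => ?_)
      rw [Nat.cast_smul_eq_nsmul]
      exact AddSubmonoid.nsmul_mem _ (hbM i) _
  refine MvPolynomial.funext fun v => ?_
  simpa [hq, b.sum_repr] using (eval_bind₁_sum_C_mul_X b p (b.repr v)).symm

end MvPolynomial

theorem AlgebraicIndependent.linearIndependent_prod_pow {ι R A : Type*} [CommRing R]
    [CommRing A] [Algebra R A] [Fintype ι] {x : ι → A} (hx : AlgebraicIndependent R x) :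
    LinearIndependent R (fun α : ι → ℕ => ∏ i, x i ^ α i) := by
  have hprod : (fun α : ι → ℕ => ∏ i, x i ^ α i) =
      aeval x ∘ basisMonomials ι R ∘ Finsupp.equivFunOnFinite.symm := by
    funext α
    simp [aeval_monomial, Finsupp.prod_fintype]
  rw [hprod]
  exact ((basisMonomials ι R).linearIndependent.map' (aeval x).toLinearMap
    (LinearMap.ker_eq_bot.mpr hx)).comp _ Finsupp.equivFunOnFinite.symm.injective

theorem LinearIndependent.algebraicIndependent_of_map_mul_eq_add {K G ι : Type*} [Field K]
    [CharZero K] [Monoid G] [Fintype ι] {a : ι → G → K} (hind : LinearIndependent K a)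
    (hadd : ∀ i x y, a i (x * y) = a i x + a i y) : AlgebraicIndependent K a := by
  let φ : Additive G →+ (ι → K) :=
    AddMonoidHom.mk' (fun x i => a i x.toMul) fun x y => _root_.funext fun i => hadd i _ _
  refine (injective_iff_map_eq_zero _).mpr fun p hp => ?_
  refine eq_zero_of_eval_eq_zero_of_span_eq_top (AddMonoidHom.mrange φ)
    hind.span_range_swap_eq_top ?_
  rintro _ ⟨x, rfl⟩
  show eval (fun i => a i x.toMul) p = 0
  simpa [hp] using (comp_aeval_apply a (Pi.evalAlgHom K (fun _ => K) x.toMul) p).symm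

theorem monomials_linear_independent_general
    {G : Type*} [CommGroup G] (n : ℕ)
    (a : Fin n → G → ℂ)
    (hadd : ∀ i, ∀ x y : G, a i (x * y) = a i x + a i y)
    (hind : LinearIndependent ℂ a) :
    LinearIndependent ℂ (fun α : Fin n → ℕ => fun x : G => ∏ i, a i x ^ α i) := by
  have hprod : (fun α : Fin n → ℕ => fun x : G => ∏ i, a i x ^ α i) =
      fun α => ∏ i, a i ^ α i := by
    ext α x
    simp [Finset.prod_apply]
  rw [hprod]
  exact (hind.algebraicIndependent_of_map_mul_eq_add hadd).linearIndependent_prod_pow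

/-- **Linear independence of monomials (Lemma 2.7 of Székelyhidi).**
Let `G` be a commutative group, `n` a positive integer, and `a₁,…,aₙ : G → ℂ` linearly
independent additive functions (homomorphisms of `G` into `(ℂ, +)`).  Then the monomials
`a^α = ∏ i, a i ^ α i`, for distinct multi-indices `α ∈ ℕ^n`, are linearly independent
over `ℂ`. -/
theorem monomials_linear_independent
    {G : Type*} [CommGroup G] (n : ℕ) (hn : 0 < n)
    (a : Fin n → G → ℂ)
    (hadd : ∀ i, ∀ x y : G, a i (x * y) = a i x + a i y)
    (hind : LinearIndependent ℂ a) :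
    LinearIndependent ℂ (fun α : Fin n → ℕ => fun x : G => ∏ i, a i x ^ α i) :=
  monomials_linear_independent_general n a hadd hind
end

section
/- Let G be a commutative group, n a positive integer, m₁,…,mₙ: G → ℂ distinct nonzero exponentials, and p₁,…,pₙ: G → ℂ generalized polynomials. If ∑_{i=1}^{n} p_i · m_i is identically zero on G, then each generalized polynomial p_i is identically zero. -/
/-- `A : G^k → ℂ` is symmetric and `k`-additive on the (multiplicatively written)
commutative group `G`. -/
def IsSymKAdditiveMul (G : Type*) [CommGroup G] (k : ℕ) (A : (Fin k → G) → ℂ) : Prop :=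
  (∀ (σ : Equiv.Perm (Fin k)) (x : Fin k → G), A (x ∘ σ) = A x) ∧
  (∀ (x : Fin k → G) (i : Fin k) (y z : G),
    A (Function.update x i (y * z)) = A (Function.update x i y) + A (Function.update x i z))

/-- `P : G → ℂ` is a generalized polynomial: a finite sum `∑_{k=0}^{l} A_k*` of
diagonalizations of symmetric `k`-additive functions. -/
def IsGenPoly (G : Type*) [CommGroup G] (P : G → ℂ) : Prop :=
  ∃ (l : ℕ) (A : (k : ℕ) → (Fin k → G) → ℂ),
    (∀ k, k ≤ l → IsSymKAdditiveMul G k (A k)) ∧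
    ∀ x : G, P x = ∑ k ∈ Finset.range (l + 1), A k (fun _ => x)

/-!
Call `f : G → K` a polynomial of degree `< d` if all `d`-fold differences of `f` vanish, where
`Δ_z f (x) = f (x z) - f x`. Expanding a multi-additive map at `x z` shows that the diagonal of a
`k`-additive map has degree `≤ k`, so generalized polynomials are polynomials in this sense.
A polynomial with `f (x z) = a f(x)` and `a ≠ 1` vanishes, since `Δ_z` acts on it as
multiplication by `a - 1`. Given `∑ pᵢ mᵢ = 0`, replacing `x` by `x y` and subtracting `m_j(y)`
times the relation yields a relation whose `j`-th coefficient `m_j(y) Δ_y p_j` has lower degree.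
By induction on the degrees all its coefficients vanish: `mᵢ(y) pᵢ(x y) = m_j(y) pᵢ(x)`.
For `i ≠ j`, choosing `y` with `mᵢ(y) ≠ m_j(y)` forces `pᵢ = 0`, and then `p_j m_j = 0`.
-/

namespace GenPoly

open Additive Function

variable {G K : Type*} [CommGroup G] [Field K]

variable (K) in
def translate (y : G) : (G → K) →ₗ[K] (G → K) := LinearMap.funLeft K K (· * y)

variable (K) in
def diff (y : G) : (G → K) →ₗ[K] (G → K) := translate K y - LinearMap.id

@[simp]
lemma translate_apply (y : G) (f : G → K) (x : G) : translate K y f x = f (x * y) := rfl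

@[simp]
lemma diff_apply (y : G) (f : G → K) (x : G) : diff K y f x = f (x * y) - f x := rfl

lemma translate_diff (y z : G) (f : G → K) :
    translate K y (diff K z f) = diff K z (translate K y f) := by
  ext x
  simp [mul_right_comm]

variable (G K) in
/-- The polynomials of degree `< d`. -/
def degLT : ℕ → Submodule K (G → K)
  | 0 => ⊥
  | d + 1 => ⨅ z, (degLT d).comap (diff K z)

lemma mem_degLT_zero {f : G → K} : f ∈ degLT G K 0 ↔ f = 0 := Submodule.mem_bot K

lemma mem_degLT_succ {d : ℕ} {f : G → K} :
    f ∈ degLT G K (d + 1) ↔ ∀ z, diff K z f ∈ degLT G K d := by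
  simp [degLT, Submodule.mem_iInf]

lemma degLT_le_succ (d : ℕ) : degLT G K d ≤ degLT G K (d + 1) := by
  induction d with
  | zero => exact bot_le
  | succ d ih => exact fun f hf => mem_degLT_succ.2 fun z => ih (mem_degLT_succ.1 hf z)

lemma degLT_mono : Monotone (degLT G K) := monotone_nat_of_le_succ degLT_le_succ

lemma translate_mem_degLT {d : ℕ} {f : G → K} (hf : f ∈ degLT G K d) (y : G) :
    translate K y f ∈ degLT G K d := by
  induction d generalizing f with
  | zero => simp [mem_degLT_zero.1 hf]
  | succ d ih =>
    exact mem_degLT_succ.2 fun z => translate_diff y z f ▸ ih (mem_degLT_succ.1 hf z)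

lemma eq_zero_of_translate_eq_smul {d : ℕ} {f : G → K} (hf : f ∈ degLT G K d) {z : G} {a : K}
    (ha : a ≠ 1) (hfz : translate K z f = a • f) : f = 0 := by
  induction d generalizing f with
  | zero => exact mem_degLT_zero.1 hf
  | succ d ih =>
    have hdiff : diff K z f = 0 := by
      refine ih (mem_degLT_succ.1 hf z) ?_
      rw [translate_diff, hfz, map_smul]
    have hfix : (a - 1) • f = 0 := by
      rw [sub_smul, one_smul, ← hfz, ← hdiff]
      rfl
    exact (smul_eq_zero.1 hfix).resolve_left (sub_ne_zero.2 ha)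

/-- Expanding `f` at `x * z` on `s`, the term with all of `s` cancels against `f` at `x`, and
the remaining terms have fewer coordinates depending on `x`. -/
lemma piecewise_mem_degLT {ι : Type*} [DecidableEq ι]
    (f : MultilinearMap ℕ (fun _ : ι => Additive G) K) (s : Finset ι) (c : ι → Additive G) :
    (fun x : G => f (s.piecewise (fun _ => ofMul x) c)) ∈ degLT G K (s.card + 1) := by
  induction s using Finset.strongInduction generalizing c with
  | H s ih =>
  refine mem_degLT_succ.2 fun z => ?_
  set c' := s.piecewise (fun _ => ofMul z) c
  have hexpand : diff K z (fun x => f (s.piecewise (fun _ => ofMul x) c)) =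
      ∑ t ∈ s.powerset.erase s, fun x => f (t.piecewise (fun _ => ofMul x) c') := by
    ext x
    have hsplit :
        s.piecewise (fun _ => ofMul (x * z)) c = s.piecewise ((fun _ => ofMul x) + c') c' := by
      ext i; by_cases hi : i ∈ s <;> simp [hi, c']
    have hfull : s.piecewise (fun _ => ofMul x) c' = s.piecewise (fun _ => ofMul x) c := by
      ext i; by_cases hi : i ∈ s <;> simp [hi, c']
    rw [diff_apply, Finset.sum_apply, hsplit, f.map_piecewise_add,
      ← Finset.sum_erase_add _ _ (Finset.mem_powerset_self s), hfull, add_sub_cancel_right]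
  rw [hexpand]
  refine Submodule.sum_mem _ fun t ht => ?_
  have hts : t ⊂ s := Finset.ssubset_iff_subset_ne.2
    ⟨Finset.mem_powerset.1 (Finset.mem_of_mem_erase ht), Finset.ne_of_mem_erase ht⟩
  exact degLT_mono (Finset.card_lt_card hts) (ih t hts c')

def multilinearMapOfAdditive {k : ℕ} (A : (Fin k → G) → K)
    (hA : ∀ (x : Fin k → G) (i : Fin k) (y z : G),
      A (update x i (y * z)) = A (update x i y) + A (update x i z)) :
    MultilinearMap ℕ (fun _ : Fin k => Additive G) K where
  toFun y := A (toMul ∘ y)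
  map_update_add' := by
    intro _ y i a b
    obtain rfl := Subsingleton.elim ‹DecidableEq (Fin k)› (instDecidableEqFin k)
    convert hA (toMul ∘ y) i a.toMul b.toMul using 2 <;> simp [comp_update]
  map_update_smul' := by
    intro _ y i n a
    obtain rfl := Subsingleton.elim ‹DecidableEq (Fin k)› (instDecidableEqFin k)
    let φ : Additive G →+ K := AddMonoidHom.mk' (fun a => A (update (toMul ∘ y) i a.toMul))
      fun a b => hA _ i _ _
    convert map_nsmul φ n a using 2 <;> simp [comp_update, φ]

lemma diag_mem_degLT {k : ℕ} {A : (Fin k → G) → K}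
    (hA : ∀ (x : Fin k → G) (i : Fin k) (y z : G),
      A (update x i (y * z)) = A (update x i y) + A (update x i z)) :
    (fun x => A fun _ => x) ∈ degLT G K (k + 1) := by
  have hdiag := piecewise_mem_degLT (multilinearMapOfAdditive A hA) Finset.univ 0
  simp only [Finset.piecewise_univ, Finset.card_univ, Fintype.card_fin] at hdiag
  exact hdiag

lemma _root_.IsGenPoly.exists_mem_degLT {P : G → ℂ} (hP : IsGenPoly G P) :
    ∃ d, P ∈ degLT G ℂ d := by
  obtain ⟨l, A, hA, hPA⟩ := hP
  have hsum : P = ∑ k ∈ Finset.range (l + 1), fun x => A k fun _ => x := by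
    ext x
    simp [hPA]
  refine ⟨l + 1, hsum ▸ Submodule.sum_mem _ fun k hk => ?_⟩
  have hkl : k ≤ l := Nat.lt_succ_iff.1 (Finset.mem_range.1 hk)
  exact degLT_mono (Nat.succ_le_succ hkl) (diag_mem_degLT (hA k hkl).2)

lemma ne_zero_of_map_mul {μ : G → K} (hμ : ∀ x y, μ (x * y) = μ x * μ y) (hμ0 : μ ≠ 0) (x : G) :
    μ x ≠ 0 := by
  intro hx
  refine hμ0 (funext fun y => ?_)
  simpa [hx] using hμ x (x⁻¹ * y)

lemma eq_zero_of_smul_translate_eq {d : ℕ} {f : G → K} (hf : f ∈ degLT G K d) {μ ν : G → K}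
    (hμ : ∀ y, μ y ≠ 0) (hμν : μ ≠ ν) (h : ∀ y, μ y • translate K y f = ν y • f) : f = 0 := by
  obtain ⟨y, hy⟩ := Function.ne_iff.1 hμν
  refine eq_zero_of_translate_eq_smul hf (z := y) (div_ne_one_of_ne hy.symm) ?_
  rw [← smul_right_inj (hμ y), h y, smul_smul, mul_div_cancel₀ _ (hμ y)]

variable {ι : Type*} [Fintype ι] {m p : ι → G → K}

lemma sum_shift_mul_eq_zero (hmul : ∀ i x y, m i (x * y) = m i x * m i y)
    (hsum : ∀ x, ∑ i, p i x * m i x = 0) (j : ι) (y x : G) :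
    ∑ i, (m i y • translate K y (p i) - m j y • p i) x * m i x = 0 :=
  calc ∑ i, (m i y • translate K y (p i) - m j y • p i) x * m i x
      = ∑ i, p i (x * y) * m i (x * y) - m j y * ∑ i, p i x * m i x := by
        rw [Finset.mul_sum, ← Finset.sum_sub_distrib]
        refine Finset.sum_congr rfl fun i _ => ?_
        simp only [Pi.sub_apply, Pi.smul_apply, translate_apply, smul_eq_mul, hmul]
        ring
    _ = 0 := by rw [hsum, hsum, mul_zero, sub_zero]

theorem eq_zero_of_sum_mul_eq_zero (hmul : ∀ i x y, m i (x * y) = m i x * m i y)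
    (hm : ∀ i x, m i x ≠ 0) (hinj : Function.Injective m) {d : ι → ℕ}
    (hp : ∀ i, p i ∈ degLT G K (d i)) (hsum : ∀ x, ∑ i, p i x * m i x = 0) : p = 0 := by
  classical
  induction d using WellFoundedLT.induction generalizing p with
  | _ d ih =>
  by_cases hd : d = 0
  · ext i : 1
    exact mem_degLT_zero.1 (by simpa [hd] using hp i)
  obtain ⟨j, hj⟩ := Function.ne_iff.1 hd
  obtain ⟨k, hk⟩ := Nat.exists_eq_add_one_of_ne_zero hj
  have hpj : p j ∈ degLT G K (k + 1) := hk ▸ hp j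
  have hshift : ∀ y, (fun i => m i y • translate K y (p i) - m j y • p i) = 0 := by
    refine fun y => ih _ (update_lt_self_iff.2 (hk ▸ k.lt_add_one)) (fun i => ?_)
      (sum_shift_mul_eq_zero hmul hsum j y)
    rcases eq_or_ne i j with rfl | hij
    · rw [update_self, ← smul_sub]
      exact Submodule.smul_mem _ _ (mem_degLT_succ.1 hpj y)
    · rw [update_of_ne hij]
      exact sub_mem (Submodule.smul_mem _ _ (translate_mem_degLT (hp i) y))
        (Submodule.smul_mem _ _ (hp i))
  have hother : ∀ i ≠ j, p i = 0 := fun i hij =>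
    eq_zero_of_smul_translate_eq (hp i) (hm i) (hinj.ne hij)
      fun y => sub_eq_zero.1 (congrFun (hshift y) i)
  have hj0 : p j = 0 := by
    ext x
    have hx := hsum x
    rw [Finset.sum_eq_single j (fun i _ hij => by simp [hother i hij]) (by simp)] at hx
    exact (mul_eq_zero.1 hx).resolve_right (hm j x)
  ext i : 1
  rcases eq_or_ne i j with rfl | hij
  exacts [hj0, hother i hij]

end GenPoly

open GenPoly in
theorem exponential_polynomials_independent_general
    {G : Type*} [CommGroup G] (n : ℕ)
    (m : Fin n → G → ℂ)
    (hexp : ∀ i, ∀ x y : G, m i (x * y) = m i x * m i y)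
    (hnz : ∀ i, m i ≠ 0)
    (hdist : ∀ i j, i ≠ j → m i ≠ m j)
    (p : Fin n → G → ℂ)
    (hpoly : ∀ i, IsGenPoly G (p i))
    (hsum : ∀ x : G, ∑ i, p i x * m i x = 0) :
    ∀ (i : Fin n) (x : G), p i x = 0 := by
  choose d hd using fun i => (hpoly i).exists_mem_degLT
  have hp : p = 0 := eq_zero_of_sum_mul_eq_zero hexp (fun i => ne_zero_of_map_mul (hexp i) (hnz i))
    (fun i j hij => by_contra fun hne => hdist i j hne hij) hd hsum
  exact fun i x => congrFun (congrFun hp i) x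

/-- **Lemma 4.3 of Székelyhidi.**
Let `G` be a commutative group, `n` a positive integer, `m₁,…,mₙ : G → ℂ` distinct nonzero
exponentials and `p₁,…,pₙ : G → ℂ` generalized polynomials.  If `∑ i, p i * m i` is
identically zero, then each `p i` is identically zero. -/
theorem exponential_polynomials_independent
    {G : Type*} [CommGroup G] (n : ℕ) (hn : 0 < n)
    (m : Fin n → G → ℂ)
    (hexp : ∀ i, ∀ x y : G, m i (x * y) = m i x * m i y)
    (hnz : ∀ i, m i ≠ 0)
    (hdist : ∀ i j, i ≠ j → m i ≠ m j)
    (p : Fin n → G → ℂ)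
    (hpoly : ∀ i, IsGenPoly G (p i))
    (hsum : ∀ x : G, ∑ i, p i x * m i x = 0) :
    ∀ (i : Fin n) (x : G), p i x = 0 :=
  exponential_polynomials_independent_general n m hexp hnz hdist p hpoly hsum
end

section
/- Let F ⊂ ℂ be a field and n a positive integer. A function D: F → ℂ is a derivation of order n (i.e. D ∈ D_n(F)) if and only if D is additive on F, D(1) = 0, and the map x ↦ D(x)/x from the multiplicative group F^× to ℂ is a generalized polynomial of degree at most n on F^×. -/
/-- `f : F → ℂ` is a derivation of order `n` (an element of `D_n(F)`).  The identically
zero map is the only derivation of order `0`; `f` is a derivation of order `n + 1` if it is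
additive and there is a `B : F × F → ℂ`, a derivation of order `n` in each variable, with
`f(xy) − x f(y) − f(x) y = B(x,y)`. -/
def IsDerOfOrder (F : Subfield ℂ) : ℕ → (F → ℂ) → Prop
  | 0, f => ∀ x, f x = 0
  | n + 1, f =>
      (∀ x y : F, f (x + y) = f x + f y) ∧
      ∃ B : F → F → ℂ,
        (∀ x : F, IsDerOfOrder F n (fun y => B x y)) ∧
        (∀ y : F, IsDerOfOrder F n (fun x => B x y)) ∧
        ∀ x y : F, f (x * y) - (x : ℂ) * f y - f x * (y : ℂ) = B x y

/-- `P : G → ℂ` is a generalized polynomial of degree at most `n` on the commutative group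
`G`. -/
def IsGenPolyOfDegLE (G : Type*) [CommGroup G] (n : ℕ) (P : G → ℂ) : Prop :=
  ∃ A : (k : ℕ) → (Fin k → G) → ℂ,
    (∀ k, k ≤ n → IsSymKAdditiveMul G k (A k)) ∧
    ∀ x : G, P x = ∑ k ∈ Finset.range (n + 1), A k (fun _ => x)
/-!
Write `Δ_g P (x) = P (x g) - P x`. On a commutative group, `P : G → ℂ` is a generalized
polynomial of degree `≤ n` iff all `(n + 1)`-fold differences `Δ_{h_0} ⋯ Δ_{h_n} P` vanish.
The diagonal of a `k`-additive map has degree `≤ k` because, by multi-additivity, one difference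
splits it into diagonals with fewer free slots. Conversely, if `P` has degree `≤ k` then
`Δ_{h_1} ⋯ Δ_{h_k} P` is a constant, symmetric and additive in each `h_i`, and the polarization
identity `Δ_{h_1} ⋯ Δ_{h_k} A*(1) = k! A(h)` shows that subtracting the diagonal of
`(k!)⁻¹ Δ_{h_1} ⋯ Δ_{h_k} P(1)` lowers the degree.

For `φ(x) = D(x)/x` and `B(x, y) = D(xy) - x D(y) - D(x) y` one has
`B(u, v)/v = u (Δ_u φ(v) - φ(u))`, so `v ↦ B(u, v)/v` has degree `≤ n` iff `Δ_u φ` does.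
Since the `B` in the definition of `D_{n+1}` is forced to be this defect, induction on `n`
(from `n = 0`, where both sides say `D = 0`) proves the characterization.
-/

open Finset

section Difference

variable {G : Type*} [CommGroup G]

def mulDiff (g : G) : Module.End ℂ (G → ℂ) where
  toFun P x := P (x * g) - P x
  map_add' P Q := by ext x; simp only [Pi.add_apply]; ring
  map_smul' c P := by ext x; simp only [Pi.smul_apply, smul_eq_mul, RingHom.id_apply]; ring

@[simp]
lemma mulDiff_apply (g : G) (P : G → ℂ) (x : G) : mulDiff g P x = P (x * g) - P x := rfl

lemma commute_mulDiff (g h : G) : Commute (mulDiff g) (mulDiff h) := by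
  ext P x
  simp only [Module.End.mul_apply, mulDiff_apply, mul_right_comm x g h]
  ring

def iterMulDiff {k : ℕ} (h : Fin k → G) : Module.End ℂ (G → ℂ) :=
  (List.ofFn fun i => mulDiff (h i)).prod

lemma iterMulDiff_cons {k : ℕ} (g : G) (h : Fin k → G) :
    iterMulDiff (Fin.cons g h : Fin (k + 1) → G) = mulDiff g * iterMulDiff h := by
  simp [iterMulDiff, List.ofFn_succ]

lemma commute_mulDiff_iterMulDiff {k : ℕ} (g : G) (h : Fin k → G) :
    Commute (mulDiff g) (iterMulDiff h) :=
  Commute.list_prod_right _ _ (by simp [commute_mulDiff])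

lemma iterMulDiff_cons_apply {k : ℕ} (g : G) (h : Fin k → G) (P : G → ℂ) :
    iterMulDiff (Fin.cons g h : Fin (k + 1) → G) P = iterMulDiff h (mulDiff g P) := by
  rw [iterMulDiff_cons, (commute_mulDiff_iterMulDiff g h).eq, Module.End.mul_apply]

lemma iterMulDiff_comp_perm {k : ℕ} (h : Fin k → G) (σ : Equiv.Perm (Fin k)) :
    iterMulDiff (h ∘ σ) = iterMulDiff h :=
  (σ.ofFn_comp_perm fun i => mulDiff (h i)).prod_eq' <|
    List.pairwise_ofFn.2 fun _ _ _ => commute_mulDiff _ _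

variable (G) in
def polyDegreeLE (n : ℕ) : Submodule ℂ (G → ℂ) :=
  ⨅ h : Fin (n + 1) → G, LinearMap.ker (iterMulDiff h)

lemma mem_polyDegreeLE {n : ℕ} {P : G → ℂ} :
    P ∈ polyDegreeLE G n ↔ ∀ h : Fin (n + 1) → G, iterMulDiff h P = 0 := by
  simp [polyDegreeLE, Submodule.mem_iInf]

lemma mem_polyDegreeLE_succ {n : ℕ} {P : G → ℂ} :
    P ∈ polyDegreeLE G (n + 1) ↔ ∀ g, mulDiff g P ∈ polyDegreeLE G n := by
  simp only [mem_polyDegreeLE, Fin.forall_fin_succ_pi, iterMulDiff_cons_apply]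

lemma polyDegreeLE_le_succ (n : ℕ) : polyDegreeLE G n ≤ polyDegreeLE G (n + 1) := by
  intro P hP
  rw [mem_polyDegreeLE] at hP ⊢
  refine Fin.consCases fun g h => ?_
  rw [iterMulDiff_cons, Module.End.mul_apply, hP, map_zero]

lemma polyDegreeLE_mono : Monotone (polyDegreeLE G) :=
  monotone_nat_of_le_succ polyDegreeLE_le_succ

lemma iterMulDiff_eq_zero {n k : ℕ} {P : G → ℂ} (hP : P ∈ polyDegreeLE G n) (hnk : n < k)
    (h : Fin k → G) : iterMulDiff h P = 0 := by
  obtain ⟨k, rfl⟩ := Nat.exists_eq_add_of_lt hnk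
  exact mem_polyDegreeLE.1 (polyDegreeLE_mono (by omega) hP) h

lemma const_mem_polyDegreeLE (n : ℕ) (c : ℂ) : Function.const G c ∈ polyDegreeLE G n := by
  rw [mem_polyDegreeLE]
  refine Fin.consCases fun g h => ?_
  have : mulDiff g (Function.const G c) = 0 := by ext; simp
  rw [iterMulDiff_cons_apply, this, map_zero]

lemma iterMulDiff_apply_eq_apply_one {k : ℕ} {P : G → ℂ} (hP : P ∈ polyDegreeLE G k)
    (h : Fin k → G) (x : G) : iterMulDiff h P x = iterMulDiff h P 1 := by
  have := congrFun (mem_polyDegreeLE.1 hP (Fin.cons x h)) 1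
  rwa [iterMulDiff_cons, Module.End.mul_apply, mulDiff_apply, one_mul, Pi.zero_apply,
    sub_eq_zero] at this

lemma apply_eq_apply_one_of_mem_polyDegreeLE_zero {P : G → ℂ} (hP : P ∈ polyDegreeLE G 0)
    (x : G) : P x = P 1 :=
  iterMulDiff_apply_eq_apply_one hP Fin.elim0 x

end Difference

section MultiAdditive

variable {G : Type*} [CommGroup G] {k : ℕ}

def IsMultiAdditiveMul (A : (Fin k → G) → ℂ) : Prop :=
  ∀ (x : Fin k → G) (i : Fin k) (y z : G),
    A (Function.update x i (y * z)) = A (Function.update x i y) + A (Function.update x i z)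

lemma IsSymKAdditiveMul.isMultiAdditiveMul {A : (Fin k → G) → ℂ} (hA : IsSymKAdditiveMul G k A) :
    IsMultiAdditiveMul A :=
  hA.2

def IsMultiAdditiveMul.toMultilinearMap {A : (Fin k → G) → ℂ} (hA : IsMultiAdditiveMul A) :
    MultilinearMap ℤ (fun _ : Fin k => Additive G) ℂ where
  toFun x := A (Additive.toMul ∘ x)
  map_update_add' := by
    intro _ x i y z
    obtain rfl : ‹DecidableEq (Fin k)› = instDecidableEqFin k := Subsingleton.elim _ _
    simp only [Function.comp_update]
    exact hA (Additive.toMul ∘ x) i y.toMul z.toMul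
  map_update_smul' := by
    intro _ x i c y
    obtain rfl : ‹DecidableEq (Fin k)› = instDecidableEqFin k := Subsingleton.elim _ _
    simp only [Function.comp_update]
    exact (AddMonoidHom.mk'
      (fun y : Additive G => A (Function.update (Additive.toMul ∘ x) i y.toMul))
      fun y z => hA _ i _ _).map_zsmul c y

lemma IsMultiAdditiveMul.map_piecewise_mul {A : (Fin k → G) → ℂ} (hA : IsMultiAdditiveMul A)
    (T : Finset (Fin k)) (u v : Fin k → G) :
    A (T.piecewise (u * v) v) = ∑ S ∈ T.powerset, A (S.piecewise u v) := by
  have := hA.toMultilinearMap.map_piecewise_add (fun i => .ofMul (u i)) (fun i => .ofMul (v i)) T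
  simp only [IsMultiAdditiveMul.toMultilinearMap, MultilinearMap.coe_mk] at this
  convert this using 3 with S
  · ext i; by_cases hi : i ∈ T <;> simp [hi]
  · ext i; by_cases hi : i ∈ S <;> simp [hi]

end MultiAdditive

section Diagonal

variable {G : Type*}

def diagOn {k : ℕ} (A : (Fin k → G) → ℂ) (T : Finset (Fin k)) (c : Fin k → G) : G → ℂ :=
  fun x => A (T.piecewise (fun _ => x) c)

lemma diagOn_sdiff_singleton {k : ℕ} {A : (Fin (k + 1) → G) → ℂ}
    (hA : ∀ (σ : Equiv.Perm (Fin (k + 1))) x, A (x ∘ σ) = A x)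
    (j : Fin (k + 1)) (g : G) :
    diagOn A (univ \ {j}) (fun _ => g) = fun x => A (Fin.cons g fun _ => x) := by
  ext x
  have hpiece : (univ \ {j}).piecewise (fun _ => x) (fun _ => g) =
      Function.update (fun _ => x) j g := by
    ext i; by_cases hi : i = j <;> simp [hi]
  have hswap : Function.update (fun _ => x) j g ∘ Equiv.swap 0 j = Fin.cons g fun _ => x := by
    rw [Function.update_comp_equiv]
    ext i
    induction i using Fin.cases <;> simp [Fin.succ_ne_zero]
  simp only [diagOn, hpiece, ← hswap, hA]

variable [CommGroup G] {k : ℕ} {A : (Fin k → G) → ℂ}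

lemma mulDiff_diagOn (hA : IsMultiAdditiveMul A) (T : Finset (Fin k)) (c : Fin k → G) (g : G) :
    mulDiff g (diagOn A T c) =
      ∑ S ∈ T.powerset.erase ∅, diagOn A (T \ S) (S.piecewise (fun _ => g) c) := by
  ext x
  have hshift : T.piecewise (fun _ => x * g) c =
      T.piecewise ((fun _ => g) * T.piecewise (fun _ => x) c) (T.piecewise (fun _ => x) c) := by
    ext i; by_cases hi : i ∈ T <;> simp [hi, mul_comm]
  have hterm : ∀ S : Finset (Fin k), S.piecewise (fun _ => g) (T.piecewise (fun _ => x) c) =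
      (T \ S).piecewise (fun _ => x) (S.piecewise (fun _ => g) c) := by
    intro S
    ext i
    by_cases hiS : i ∈ S
    · simp [hiS]
    · by_cases hiT : i ∈ T <;> simp [hiS, hiT]
  simp only [mulDiff_apply, Finset.sum_apply, diagOn]
  rw [hshift, hA.map_piecewise_mul,
    ← Finset.add_sum_erase _ _ (Finset.empty_mem_powerset T), Finset.piecewise_empty,
    add_sub_cancel_left]
  exact Finset.sum_congr rfl fun S _ => congrArg A (hterm S)

lemma diagOn_mem_polyDegreeLE (hA : IsMultiAdditiveMul A) (n : ℕ) :
    ∀ (T : Finset (Fin k)) (c : Fin k → G), T.card ≤ n → diagOn A T c ∈ polyDegreeLE G n := by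
  induction n with
  | zero =>
    intro T c hT
    rw [Finset.card_eq_zero.1 (Nat.le_zero.1 hT)]
    exact const_mem_polyDegreeLE 0 (A c)
  | succ n ih =>
    intro T c hT
    refine mem_polyDegreeLE_succ.2 fun g => ?_
    rw [mulDiff_diagOn hA]
    refine Submodule.sum_mem _ fun S hS => ih _ _ ?_
    obtain ⟨hS0, hST⟩ := Finset.mem_erase.1 hS
    rw [Finset.card_sdiff_of_subset (Finset.mem_powerset.1 hST)]
    have := Finset.card_pos.2 (Finset.nonempty_iff_ne_empty.2 hS0)
    omega

lemma diag_mem_polyDegreeLE (hA : IsMultiAdditiveMul A) :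
    (fun x => A fun _ => x) ∈ polyDegreeLE G k := by
  convert diagOn_mem_polyDegreeLE hA k Finset.univ 1 (by simp) using 1
  ext x
  simp [diagOn]

end Diagonal

section Polarization

variable {G : Type*} [CommGroup G]

lemma Finset.filter_card_eq_one_powerset_erase_empty {α : Type*} [DecidableEq α] (s : Finset α) :
    (s.powerset.erase ∅).filter (fun S => S.card = 1) = s.map ⟨singleton, singleton_injective⟩ := by
  ext S
  simp only [mem_filter, mem_erase, mem_powerset, card_eq_one, mem_map, Function.Embedding.coeFn_mk]
  constructor
  · rintro ⟨⟨-, hS⟩, a, rfl⟩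
    exact ⟨a, singleton_subset_iff.1 hS, rfl⟩
  · rintro ⟨a, ha, rfl⟩
    exact ⟨⟨singleton_ne_empty a, singleton_subset_iff.2 ha⟩, a, rfl⟩

variable {k : ℕ} {A : (Fin (k + 1) → G) → ℂ}

lemma IsSymKAdditiveMul.cons (hA : IsSymKAdditiveMul G (k + 1) A) (g : G) :
    IsSymKAdditiveMul G k fun y => A (Fin.cons g y) := by
  refine ⟨fun σ y => ?_, fun y i a b => ?_⟩
  · have : (Fin.cons g (y ∘ σ) : Fin (k + 1) → G) =
        Fin.cons g y ∘ Equiv.Perm.decomposeFin.symm (0, σ) := by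
      ext i
      induction i using Fin.cases <;> simp [Equiv.Perm.decomposeFin_symm_apply_succ]
    simp only [this, hA.1]
  · simp only [Fin.cons_update]
    exact hA.2 _ _ _ _

open Nat in
theorem iterMulDiff_diag_apply_one : ∀ {k : ℕ} {A : (Fin k → G) → ℂ},
    IsSymKAdditiveMul G k A → ∀ h : Fin k → G,
      iterMulDiff h (fun x => A fun _ => x) 1 = k ! * A h
  | 0, A, _, h => by
    simp [iterMulDiff, Subsingleton.elim h (fun _ => 1)]
  | k + 1, A, hA, h => by
    obtain ⟨g, t, rfl⟩ : ∃ g t, h = Fin.cons g t := ⟨h 0, Fin.tail h, (Fin.cons_self_tail h).symm⟩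
    have hdiag : (fun x => A fun _ => x) = diagOn A univ (fun _ => g) := by
      ext x; simp [diagOn]
    have hlarge : ∀ S ∈ (univ.powerset.erase ∅).filter (fun S => ¬ S.card = 1),
        iterMulDiff t (diagOn A (univ \ S) (fun _ => g)) 1 = 0 := by
      intro S hS
      obtain ⟨hS, hS1⟩ := mem_filter.1 hS
      have hS0 := card_pos.2 (nonempty_iff_ne_empty.2 (mem_erase.1 hS).1)
      have hcard : (univ \ S).card < k := by
        have := S.card_le_univ
        rw [card_sdiff_of_subset (subset_univ S), Finset.card_univ]
        simp only [Fintype.card_fin] at this ⊢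
        omega
      exact congrFun (iterMulDiff_eq_zero
        (diagOn_mem_polyDegreeLE hA.isMultiAdditiveMul _ _ _ le_rfl) hcard t) 1
    -- `Δ_g` of the diagonal is a sum over the nonempty sets `S` of slots set to `g`; the other
    -- `k` differences kill the terms with `|S| ≥ 2`, and each singleton contributes `k! A (g, t)`.
    rw [iterMulDiff_cons_apply, hdiag, mulDiff_diagOn hA.isMultiAdditiveMul]
    simp only [piecewise_same, map_sum, Finset.sum_apply]
    rw [← sum_filter_add_sum_filter_not _ (fun S => S.card = 1), sum_eq_zero hlarge, add_zero,
      filter_card_eq_one_powerset_erase_empty, sum_map]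
    simp only [Function.Embedding.coeFn_mk, diagOn_sdiff_singleton hA.1,
      iterMulDiff_diag_apply_one (hA.cons g)]
    simp [Nat.factorial_succ]
    ring

end Polarization

section Frechet

variable {G : Type*} [CommGroup G]

lemma mulDiff_mul (y z : G) : mulDiff (y * z) = mulDiff y + mulDiff z + mulDiff z * mulDiff y := by
  ext P x
  simp only [mulDiff_apply, LinearMap.add_apply, Module.End.mul_apply, Pi.add_apply,
    mul_assoc, mul_comm y z]
  ring

lemma iterMulDiff_update_zero_mul {m : ℕ} {P : G → ℂ} (hP : P ∈ polyDegreeLE G (m + 1))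
    (h : Fin (m + 1) → G) (y z : G) :
    iterMulDiff (Function.update h 0 (y * z)) P =
      iterMulDiff (Function.update h 0 y) P + iterMulDiff (Function.update h 0 z) P := by
  have hcons : ∀ a, Function.update h 0 a = Fin.cons a (Fin.tail h) := fun a => by
    rw [← Fin.update_cons_zero (h 0), Fin.cons_self_tail]
  have hsecond : iterMulDiff (Fin.tail h) (mulDiff z (mulDiff y P)) = 0 := by
    rw [← iterMulDiff_cons_apply, ← iterMulDiff_cons_apply]
    exact iterMulDiff_eq_zero hP (by omega) _
  simp only [hcons, iterMulDiff_cons_apply, mulDiff_mul, LinearMap.add_apply, Module.End.mul_apply,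
    map_add, hsecond, add_zero]

lemma iterMulDiff_update_mul {k : ℕ} {P : G → ℂ} (hP : P ∈ polyDegreeLE G k)
    (h : Fin k → G) (i : Fin k) (y z : G) :
    iterMulDiff (Function.update h i (y * z)) P =
      iterMulDiff (Function.update h i y) P + iterMulDiff (Function.update h i z) P := by
  obtain ⟨m, rfl⟩ := Nat.exists_eq_succ_of_ne_zero i.pos.ne'
  have hswap : ∀ a, iterMulDiff (Function.update h i a) =
      iterMulDiff (Function.update (h ∘ Equiv.swap 0 i) 0 a) := fun a => by
    rw [← iterMulDiff_comp_perm _ (Equiv.swap 0 i), Function.update_comp_equiv,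
      Equiv.symm_swap, Equiv.swap_apply_right]
  simp only [hswap]
  exact iterMulDiff_update_zero_mul hP _ y z

open Nat in
noncomputable def leadingForm (P : G → ℂ) (k : ℕ) (h : Fin k → G) : ℂ :=
  (k ! : ℂ)⁻¹ * iterMulDiff h P 1

lemma isSymKAdditiveMul_leadingForm {k : ℕ} {P : G → ℂ} (hP : P ∈ polyDegreeLE G k) :
    IsSymKAdditiveMul G k (leadingForm P k) :=
  ⟨fun σ h => by simp only [leadingForm, iterMulDiff_comp_perm],
    fun h i y z => by simp only [leadingForm, iterMulDiff_update_mul hP, Pi.add_apply, mul_add]⟩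

lemma sub_diag_leadingForm_mem_polyDegreeLE {n : ℕ} {P : G → ℂ}
    (hP : P ∈ polyDegreeLE G (n + 1)) :
    (P - fun x => leadingForm P (n + 1) fun _ => x) ∈ polyDegreeLE G n := by
  have hA := isSymKAdditiveMul_leadingForm hP
  refine mem_polyDegreeLE.2 fun h => funext fun x => ?_
  rw [map_sub, Pi.sub_apply, iterMulDiff_apply_eq_apply_one hP,
    iterMulDiff_apply_eq_apply_one (diag_mem_polyDegreeLE hA.isMultiAdditiveMul),
    iterMulDiff_diag_apply_one hA, leadingForm,
    mul_inv_cancel_left₀ (Nat.cast_ne_zero.2 (Nat.factorial_ne_zero _)), sub_self, Pi.zero_apply]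

theorem isGenPolyOfDegLE_of_mem_polyDegreeLE {n : ℕ} {P : G → ℂ} (hP : P ∈ polyDegreeLE G n) :
    IsGenPolyOfDegLE G n P := by
  induction n generalizing P with
  | zero =>
    refine ⟨fun _ _ => P 1, fun k hk => ?_, fun x => ?_⟩
    · obtain rfl := Nat.le_zero.1 hk
      exact ⟨fun _ _ => rfl, fun _ i => i.elim0⟩
    · simp [apply_eq_apply_one_of_mem_polyDegreeLE_zero hP x]
  | succ n ih =>
    obtain ⟨A, hA, hsum⟩ := ih (sub_diag_leadingForm_mem_polyDegreeLE hP)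
    refine ⟨Function.update A (n + 1) (leadingForm P (n + 1)), fun k hk => ?_, fun x => ?_⟩
    · rcases (Nat.le_succ_iff.1 hk) with hk | rfl
      · rw [Function.update_of_ne (by omega)]
        exact hA k hk
      · rw [Function.update_self]
        exact isSymKAdditiveMul_leadingForm hP
    · rw [Finset.sum_range_succ, Function.update_self,
        Finset.sum_congr rfl fun k hk => by rw [Function.update_of_ne (by simp at hk; omega)],
        ← hsum, Pi.sub_apply, sub_add_cancel]

theorem mem_polyDegreeLE_of_isGenPolyOfDegLE {n : ℕ} {P : G → ℂ} (hP : IsGenPolyOfDegLE G n P) :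
    P ∈ polyDegreeLE G n := by
  obtain ⟨A, hA, hsum⟩ := hP
  have hP : P = ∑ k ∈ Finset.range (n + 1), fun x => A k fun _ => x := by
    ext x; rw [hsum, Finset.sum_apply]
  rw [hP]
  refine Submodule.sum_mem _ fun k hk => ?_
  have hkn : k ≤ n := Nat.lt_succ_iff.1 (Finset.mem_range.1 hk)
  exact polyDegreeLE_mono hkn (diag_mem_polyDegreeLE (hA k hkn).isMultiAdditiveMul)

theorem isGenPolyOfDegLE_iff_mem_polyDegreeLE {n : ℕ} {P : G → ℂ} :
    IsGenPolyOfDegLE G n P ↔ P ∈ polyDegreeLE G n :=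
  ⟨mem_polyDegreeLE_of_isGenPolyOfDegLE, isGenPolyOfDegLE_of_mem_polyDegreeLE⟩

end Frechet

section Derivation

variable {F : Subfield ℂ}

noncomputable def dlog (D : F → ℂ) (u : Fˣ) : ℂ := D u / (u : ℂ)

noncomputable def leibnizDefect (D : F → ℂ) (x y : F) : ℂ := D (x * y) - x * D y - D x * y

lemma leibnizDefect_comm (D : F → ℂ) (x y : F) : leibnizDefect D x y = leibnizDefect D y x := by
  simp only [leibnizDefect, mul_comm x y]
  ring

lemma dlog_leibnizDefect (D : F → ℂ) (u : Fˣ) :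
    dlog (leibnizDefect D u) = (u : ℂ) • (mulDiff u (dlog D) - Function.const _ (dlog D u)) := by
  ext v
  have hu : ((u : F) : ℂ) ≠ 0 := by simp
  have hv : ((v : F) : ℂ) ≠ 0 := by simp
  simp only [dlog, leibnizDefect, mulDiff_apply, Pi.smul_apply, Pi.sub_apply, Function.const_apply,
    Units.val_mul, Subfield.coe_mul, smul_eq_mul, mul_comm (v : F) (u : F)]
  field_simp

lemma dlog_leibnizDefect_mem_polyDegreeLE_iff {n : ℕ} (D : F → ℂ) (u : Fˣ) :
    dlog (leibnizDefect D u) ∈ polyDegreeLE Fˣ n ↔ mulDiff u (dlog D) ∈ polyDegreeLE Fˣ n := by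
  rw [dlog_leibnizDefect, Submodule.smul_mem_iff _ (by simp),
    Submodule.sub_mem_iff_left _ (const_mem_polyDegreeLE n _)]

lemma isDerOfOrder_succ_iff {n : ℕ} {D : F → ℂ} :
    IsDerOfOrder F (n + 1) D ↔
      (∀ x y : F, D (x + y) = D x + D y) ∧ ∀ x, IsDerOfOrder F n (leibnizDefect D x) := by
  constructor
  · rintro ⟨hadd, B, hB, -, hDB⟩
    obtain rfl : B = leibnizDefect D := by ext x y; exact (hDB x y).symm
    exact ⟨hadd, hB⟩
  · rintro ⟨hadd, hB⟩
    refine ⟨hadd, leibnizDefect D, hB, fun y => ?_, fun _ _ => rfl⟩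
    simpa only [leibnizDefect_comm D _ y] using hB y

theorem isDerOfOrder_iff_mem_polyDegreeLE (n : ℕ) (D : F → ℂ) :
    IsDerOfOrder F n D ↔
      (∀ x y : F, D (x + y) = D x + D y) ∧ D 1 = 0 ∧ dlog D ∈ polyDegreeLE Fˣ n := by
  induction n generalizing D with
  | zero =>
    change (∀ x, D x = 0) ↔ _
    constructor
    · intro hD
      obtain rfl : D = 0 := funext hD
      refine ⟨fun _ _ => by simp, rfl, ?_⟩
      convert (polyDegreeLE Fˣ 0).zero_mem
      ext; simp [dlog]
    · rintro ⟨hadd, hD1, hD⟩ x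
      rcases eq_or_ne x 0 with rfl | hx
      · exact (AddMonoidHom.mk' D hadd).map_zero
      · have := apply_eq_apply_one_of_mem_polyDegreeLE_zero hD (Units.mk0 x hx)
        simpa [dlog, hD1, hx] using this
  | succ n ih =>
    simp only [isDerOfOrder_succ_iff, ih, mem_polyDegreeLE_succ,
      ← dlog_leibnizDefect_mem_polyDegreeLE_iff]
    constructor
    · rintro ⟨hadd, hB⟩
      refine ⟨hadd, ?_, fun u => (hB u).2.2⟩
      simpa [leibnizDefect] using (hB 1).2.1
    · rintro ⟨hadd, hD1, hD⟩
      refine ⟨hadd, fun x => ⟨fun y z => ?_, by simp [leibnizDefect, hD1], ?_⟩⟩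
      · simp only [leibnizDefect, mul_add, hadd, Subfield.coe_add]
        ring
      rcases eq_or_ne x 0 with rfl | hx
      · have hD0 : D 0 = 0 := (AddMonoidHom.mk' D hadd).map_zero
        convert (polyDegreeLE Fˣ n).zero_mem
        ext; simp [dlog, leibnizDefect, hD0]
      · exact hD (Units.mk0 x hx)

end Derivation

theorem higher_order_derivation_characterization_general
    (F : Subfield ℂ) (n : ℕ) (D : F → ℂ) :
    IsDerOfOrder F n D ↔
      (∀ x y : F, D (x + y) = D x + D y) ∧
      D 1 = 0 ∧
      IsGenPolyOfDegLE Fˣ n (fun x : Fˣ => D (x : F) / ((x : F) : ℂ)) := by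
  rw [isGenPolyOfDegLE_iff_mem_polyDegreeLE]
  exact isDerOfOrder_iff_mem_polyDegreeLE n D

/-- **Characterization of higher order derivations (Kiss–Laczkovich).**
Let `F ⊂ ℂ` be a field and `n` a positive integer.  A function `D : F → ℂ` is a derivation
of order `n` if and only if `D` is additive, `D(1) = 0`, and the map `x ↦ D(x)/x` from the
multiplicative group `F^×` to `ℂ` is a generalized polynomial of degree at most `n`. -/
theorem higher_order_derivation_characterization
    (F : Subfield ℂ) (n : ℕ) (hn : 0 < n) (D : F → ℂ) :
    IsDerOfOrder F n D ↔
      (∀ x y : F, D (x + y) = D x + D y) ∧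
      D 1 = 0 ∧
      IsGenPolyOfDegLE Fˣ n (fun x : Fˣ => D (x : F) / ((x : F) : ℂ)) :=
  higher_order_derivation_characterization_general F n D
end
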